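/- Let f be a rational function of one variable. Then applying the product of divided differences ∂₁∂₂⋯∂_{n−1} to f(x₁)·x₂ x₃ ⋯ xₙ yields the symmetric function Σ_{i=1}^{n} f(x_i) ∏_{j≠i} x_j / ∏_{j≠i}(x_i − x_j). -/

import Mathlib

/-!
After `k` divided differences the function is `L_{k+1} · x_{k+2} ⋯ x_n`, where
`L_m = Σ_{i ≤ m} f(x_i) ∏_{j ≤ m, j ≠ i} x_j / (x_i - x_j)` is the Lagrange sum over the
first `m` variables. The transposition `s_{k+1}` fixes the coefficients of `f`, so it acts
on `L_{k+1}` by renaming the node `x_{k+1}` into `x_{k+2}`; the divided difference of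
`L_{k+1} x_{k+2}` is then `L_{k+2}` by a partial fraction identity at each node.
-/

noncomputable section

open scoped BigOperators

namespace Gaudin

variable {R : Type*} [CommRing R]

/-- The generating series `∏_{b∈B}(1-zb) / ∏_{a∈A}(1-za)` of the complete
functions of the formal difference of alphabets `A - B` (the inverse is taken
via `PowerSeries.invOfUnit`, legitimate since the constant coefficient is `1`). -/
def genSeries (A B : Multiset R) : PowerSeries R :=
  (B.map (fun b => 1 - PowerSeries.C b * PowerSeries.X)).prod *
    PowerSeries.invOfUnit ((A.map (fun a => 1 - PowerSeries.C a * PowerSeries.X)).prod) 1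

/-- The complete function `S_m(A-B)`: the coefficient of `z^m` in the generating
series, and `0` for `m < 0`. -/
def Scomp (A B : Multiset R) (m : ℤ) : R :=
  if m < 0 then 0 else PowerSeries.coeff m.toNat (genSeries A B)

/-- The Schur function of index `v ∈ ℕ^p` of the difference of alphabets `A - B`:
`S_v(A-B) = det( S_{v_c + c - ρ}(A-B) )_{ρ,c = 1,…,p}`. -/
def SchurS {p : ℕ} (A B : Multiset R) (v : Fin p → ℕ) : R :=
  Matrix.det (Matrix.of fun ρ c : Fin p => Scomp A B ((v c : ℤ) + (c : ℤ) - (ρ : ℤ)))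

/-- The Vandermonde `Δ(x) = ∏_{i<j} (x_j - x_i)`. -/
def vand {n : ℕ} (x : Fin n → R) : R :=
  ∏ i : Fin n, ∏ j ∈ Finset.Ioi i, (x j - x i)

variable {K : Type*} [Field K]

/-- The Gaudin function of level `r`:
`F^r_n(x,y) = (R(x, y(1+t+⋯+t^r)) / (Δ(x)Δ(y))) · det(1/∏_{k=0}^r (x_i - t^k y_j))`. -/
def gaudinF (n r : ℕ) (t : K) (x y : Fin n → K) : K :=
  ((∏ i : Fin n, ∏ j : Fin n, ∏ k ∈ Finset.range (r + 1), (x i - t ^ k * y j)) /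
      (vand x * vand y)) *
    Matrix.det (Matrix.of fun i j : Fin n =>
      (∏ k ∈ Finset.range (r + 1), (x i - t ^ k * y j))⁻¹)

/-- The alphabet `y(1+t+⋯+t^r) = {y, ty, …, t^r y}` attached to a single letter `y`. -/
def alph1t (r : ℕ) (t yi : K) : Multiset K :=
  (Finset.univ : Finset (Fin (r + 1))).val.map fun k => t ^ (k : ℕ) * yi

/-- The alphabet (multiset) attached to a finite family of letters. -/
def alphOf {n : ℕ} (x : Fin n → K) : Multiset K :=
  (Finset.univ : Finset (Fin n)).val.map x

/-- The ordinary Schur polynomial `s_λ(x₁,…,xₙ)` in bialternant form. -/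
def schurPol {n : ℕ} (lam : Fin n → ℕ) (x : Fin n → K) : K :=
  Matrix.det (Matrix.of fun i j : Fin n => x i ^ (lam j + (n - 1 - (j : ℕ)))) /
    Matrix.det (Matrix.of fun i j : Fin n => x i ^ (n - 1 - (j : ℕ)))

/-- Substitution of variables in a rational function, computed on the reduced
fraction (numerator/denominator), with the usual junk-value convention if the
denominator specializes to zero. -/
def subst {σ : Type*} (g : σ → FractionRing (MvPolynomial σ ℚ))
    (f : FractionRing (MvPolynomial σ ℚ)) : FractionRing (MvPolynomial σ ℚ) :=
  MvPolynomial.aeval g (IsFractionRing.num (MvPolynomial σ ℚ) f) /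
    MvPolynomial.aeval g ((IsFractionRing.den (MvPolynomial σ ℚ) f : MvPolynomial σ ℚ))

/-- Variable indices for the field `ℚ(t, x₁,…,xₙ, y₁,…,yₙ)`. -/
abbrev Vars (n : ℕ) := Unit ⊕ Fin n ⊕ Fin n

/-- The field `ℚ(t, x₁,…,xₙ, y₁,…,yₙ)`. -/
abbrev Kn (n : ℕ) := FractionRing (MvPolynomial (Vars n) ℚ)

/-- The indeterminate `t`. -/
def tv (n : ℕ) : Kn n :=
  algebraMap (MvPolynomial (Vars n) ℚ) (Kn n) (MvPolynomial.X (Sum.inl ()))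

/-- The indeterminates `x₁,…,xₙ`. -/
def xv {n : ℕ} (i : Fin n) : Kn n :=
  algebraMap (MvPolynomial (Vars n) ℚ) (Kn n) (MvPolynomial.X (Sum.inr (Sum.inl i)))

/-- The indeterminates `y₁,…,yₙ`. -/
def yv {n : ℕ} (j : Fin n) : Kn n :=
  algebraMap (MvPolynomial (Vars n) ℚ) (Kn n) (MvPolynomial.X (Sum.inr (Sum.inr j)))

/-- The action of a permutation `w ∈ S_n` on rational functions, permuting the
`x`-variables (and fixing `t` and the `y`-variables). -/
def permAct {n : ℕ} (w : Equiv.Perm (Fin n)) : Kn n → Kn n :=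
  subst (fun v => match v with
    | Sum.inl () => tv n
    | Sum.inr (Sum.inl i) => xv (w i)
    | Sum.inr (Sum.inr j) => yv j)

/-- The Euler–Poincaré symmetrizer
`f ⋃_ω = Σ_{w∈S_n} w( f · ∏_{i<j} (t x_i - x_j)/(x_i - x_j) )`. -/
def Uomega {n : ℕ} (f : Kn n) : Kn n :=
  ∑ w : Equiv.Perm (Fin n), permAct w
    (f * ∏ i : Fin n, ∏ j ∈ Finset.Ioi i, (tv n * xv i - xv j) / (xv i - xv j))

/-- The divided difference `∂_k` (0-indexed: acting on the pair `x_{k+1}, x_{k+2}`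
of the 1-indexed variables), `f ∂ = (f - f^s)/(x_k - x_{k+1})`. -/
def ddOp (n : ℕ) (k : ℕ) (f : Kn n) : Kn n :=
  if h : k + 1 < n then
    (f - permAct (Equiv.swap ⟨k, Nat.lt_of_succ_lt h⟩ ⟨k + 1, h⟩) f) /
      (xv ⟨k, Nat.lt_of_succ_lt h⟩ - xv ⟨k + 1, h⟩)
  else f

/-- Successive application `g ∂₁ ∂₂ ⋯ ∂_m` (1-indexed) of divided differences. -/
def ddChain (n : ℕ) (g : Kn n) : ℕ → Kn n
  | 0 => g
  | k + 1 => ddOp n k (ddChain n g k)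

section Lagrange

variable {ι κ : Type*} [DecidableEq ι] [DecidableEq κ]

def lagrangeWeight (x : ι → K) (S : Finset ι) (i : ι) : K :=
  ∏ j ∈ S.erase i, x j / (x i - x j)

def lagrangeSum (x F : ι → K) (S : Finset ι) : K :=
  ∑ i ∈ S, F i * lagrangeWeight x S i

lemma lagrangeWeight_insert_self (x : ι → K) {S : Finset ι} {c : ι} (hc : c ∉ S) :
    lagrangeWeight x (insert c S) c = lagrangeWeight x S c := by
  rw [lagrangeWeight, lagrangeWeight, Finset.erase_insert hc, Finset.erase_eq_of_notMem hc]

lemma lagrangeWeight_insert_of_ne (x : ι → K) {S : Finset ι} {c i : ι} (hc : c ∉ S)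
    (hi : i ≠ c) :
    lagrangeWeight x (insert c S) i = x c / (x i - x c) * lagrangeWeight x S i := by
  rw [lagrangeWeight, lagrangeWeight, Finset.erase_insert_of_ne hi.symm,
    Finset.prod_insert fun h => hc (Finset.mem_of_mem_erase h)]

lemma lagrangeSum_insert (x F : ι → K) {S : Finset ι} {c : ι} (hc : c ∉ S) :
    lagrangeSum x F (insert c S) =
      F c * lagrangeWeight x S c +
        ∑ i ∈ S, F i * (x c / (x i - x c) * lagrangeWeight x S i) := by
  rw [lagrangeSum, Finset.sum_insert hc, lagrangeWeight_insert_self x hc]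
  congr 1
  refine Finset.sum_congr rfl fun i hi => ?_
  rw [lagrangeWeight_insert_of_ne x hc (ne_of_mem_of_not_mem hi hc)]

lemma lagrangeSum_insert_insert {x : ι → K} (hx : Function.Injective x) (F : ι → K)
    {T : Finset ι} {a b : ι} (hab : a ≠ b) (ha : a ∉ T) (hb : b ∉ T) :
    (lagrangeSum x F (insert a T) * x b - lagrangeSum x F (insert b T) * x a) / (x a - x b) =
      lagrangeSum x F (insert b (insert a T)) := by
  have hba : b ∉ insert a T := by simp [hab.symm, hb]
  have hne : ∀ {i j}, i ≠ j → x i - x j ≠ 0 := fun h => sub_ne_zero.mpr (hx.ne h)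
  have hnodes : (∑ i ∈ T, F i * (x a / (x i - x a) * lagrangeWeight x T i)) * x b -
      (∑ i ∈ T, F i * (x b / (x i - x b) * lagrangeWeight x T i)) * x a =
      (∑ i ∈ T, F i * (x b / (x i - x b) * lagrangeWeight x (insert a T) i)) * (x a - x b) := by
    rw [Finset.sum_mul, Finset.sum_mul, Finset.sum_mul, ← Finset.sum_sub_distrib]
    refine Finset.sum_congr rfl fun i hi => ?_
    have hia := ne_of_mem_of_not_mem hi ha
    rw [lagrangeWeight_insert_of_ne x ha hia]
    have := hne hia
    have := hne (ne_of_mem_of_not_mem hi hb)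
    field_simp
    ring
  have hends : F a * lagrangeWeight x T a * x b - F b * lagrangeWeight x T b * x a =
      (F b * (x a / (x b - x a) * lagrangeWeight x T b) +
        F a * (x b / (x a - x b) * lagrangeWeight x T a)) * (x a - x b) := by
    have := hne hab
    have := hne hab.symm
    field_simp
    ring
  rw [lagrangeSum_insert x F hba, lagrangeSum_insert x F ha, lagrangeSum_insert x F hb,
    lagrangeWeight_insert_of_ne x ha hab.symm, Finset.sum_insert ha,
    lagrangeWeight_insert_self x ha, div_eq_iff (hne hab)]
  linear_combination hnodes + hends

lemma map_lagrangeSum {L : Type*} [Field L] (φ : K →+* L) (x F : ι → K) (S : Finset ι) :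
    φ (lagrangeSum x F S) = lagrangeSum (φ ∘ x) (φ ∘ F) S := by
  simp [lagrangeSum, lagrangeWeight, map_sum, map_prod, map_div₀]

lemma lagrangeSum_comp_equiv (σ : ι ≃ κ) (x F : κ → K) (S : Finset ι) :
    lagrangeSum (x ∘ σ) (F ∘ σ) S = lagrangeSum x F (S.map σ.toEmbedding) := by
  simp only [lagrangeSum, lagrangeWeight, Finset.sum_map, ← Finset.map_erase, Finset.prod_map]
  rfl

lemma map_swap_insert {T : Finset ι} {a b : ι} (ha : a ∉ T) (hb : b ∉ T) :
    (insert a T).map (Equiv.swap a b).toEmbedding = insert b T := by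
  ext j
  simp only [Finset.mem_map_equiv, Finset.mem_insert, Equiv.symm_swap, Equiv.swap_apply_def]
  split_ifs with h1 h2 <;> subst_vars <;> simp_all [eq_comm]

end Lagrange

lemma subst_eq_ringHom {σ : Type*} (g : σ → FractionRing (MvPolynomial σ ℚ))
    (ψ : FractionRing (MvPolynomial σ ℚ) →+* FractionRing (MvPolynomial σ ℚ))
    (hψ : ∀ v, ψ (algebraMap (MvPolynomial σ ℚ) _ (MvPolynomial.X v)) = g v)
    (f : FractionRing (MvPolynomial σ ℚ)) : subst g f = ψ f := by
  have haeval : MvPolynomial.aeval g =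
      RingHom.toRatAlgHom (ψ.comp (algebraMap (MvPolynomial σ ℚ) (FractionRing _))) :=
    MvPolynomial.algHom_ext fun v => by simp [hψ]
  simp only [subst, haeval, RingHom.toRatAlgHom_apply, RingHom.comp_apply, ← map_div₀,
    IsFractionRing.mk'_num_den']

section Perm

variable {n : ℕ}

def permVars (w : Equiv.Perm (Fin n)) : Vars n ≃ Vars n :=
  (Equiv.refl Unit).sumCongr (w.sumCongr (Equiv.refl (Fin n)))

/-- `permAct w` realised as a field automorphism (see `permAct_eq_permEquiv`). -/
def permEquiv (w : Equiv.Perm (Fin n)) : Kn n ≃+* Kn n :=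
  IsFractionRing.ringEquivOfRingEquiv (MvPolynomial.renameEquiv ℚ (permVars w)).toRingEquiv

lemma permEquiv_algebraMap_X (w : Equiv.Perm (Fin n)) (v : Vars n) :
    permEquiv w (algebraMap (MvPolynomial (Vars n) ℚ) (Kn n) (MvPolynomial.X v)) =
      algebraMap (MvPolynomial (Vars n) ℚ) (Kn n) (MvPolynomial.X (permVars w v)) := by
  simp [permEquiv]

lemma permEquiv_tv (w : Equiv.Perm (Fin n)) : permEquiv w (tv n) = tv n :=
  permEquiv_algebraMap_X w _

lemma permEquiv_xv (w : Equiv.Perm (Fin n)) (i : Fin n) : permEquiv w (xv i) = xv (w i) :=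
  permEquiv_algebraMap_X w _

lemma permEquiv_yv (w : Equiv.Perm (Fin n)) (j : Fin n) : permEquiv w (yv j) = yv j :=
  permEquiv_algebraMap_X w _

lemma permAct_eq_permEquiv (w : Equiv.Perm (Fin n)) (f : Kn n) : permAct w f = permEquiv w f := by
  refine subst_eq_ringHom _ (permEquiv w : Kn n →+* Kn n) ?_ f
  rintro (⟨⟩ | i | j) <;> exact permEquiv_algebraMap_X w _

lemma permEquiv_eq_self_of_mem_closure (w : Equiv.Perm (Fin n)) {a : Kn n}
    (ha : a ∈ Subfield.closure ({tv n} ∪ Set.range (yv (n := n)))) : permEquiv w a = a := by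
  refine RingHom.eqOn_field_closure (f := (permEquiv w : Kn n →+* Kn n)) (g := RingHom.id _) ?_ ha
  rintro z (rfl | ⟨j, rfl⟩)
  · exact permEquiv_tv w
  · exact permEquiv_yv w j

lemma xv_injective : Function.Injective (xv (n := n)) := fun i j h => by
  simpa using
    MvPolynomial.X_injective (IsFractionRing.injective (MvPolynomial (Vars n) ℚ) (Kn n) h)

end Perm

lemma map_ratFuncEval_of_coeff_fixed {L : Type*} [Field L] (φ : L →+* L) (f : RatFunc L)
    (hnum : ∀ m, φ (f.num.coeff m) = f.num.coeff m)
    (hden : ∀ m, φ (f.denom.coeff m) = f.denom.coeff m) (z : L) :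
    φ (f.eval (RingHom.id L) z) = f.eval (RingHom.id L) (φ z) := by
  have hmap : ∀ p : Polynomial L, (∀ m, φ (p.coeff m) = p.coeff m) →
      φ (p.eval₂ (RingHom.id L) z) = p.eval₂ (RingHom.id L) (φ z) := by
    intro p hp
    rw [Polynomial.hom_eval₂, RingHom.comp_id, ← Polynomial.eval_map, Polynomial.eval₂_id]
    congr 1
    exact Polynomial.ext fun m => by rw [Polynomial.coeff_map, hp]
  rw [RatFunc.eval, RatFunc.eval, map_div₀, hmap _ hnum, hmap _ hden]

lemma ddOp_eq_permEquiv {n k : ℕ} (h : k + 1 < n) (g : Kn n) :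
    ddOp n k g =
      (g - permEquiv (Equiv.swap ⟨k, Nat.lt_of_succ_lt h⟩ ⟨k + 1, h⟩) g) /
        (xv ⟨k, Nat.lt_of_succ_lt h⟩ - xv ⟨k + 1, h⟩) := by
  rw [ddOp, dif_pos h, permAct_eq_permEquiv]

section Chain

variable {n : ℕ}

def initSeg (n k : ℕ) : Finset (Fin n) :=
  Finset.univ.filter fun j => (j : ℕ) < k

lemma initSeg_zero : initSeg n 0 = ∅ := by
  simp [initSeg]

lemma initSeg_succ {k : ℕ} (hk : k < n) :
    initSeg n (k + 1) = insert ⟨k, hk⟩ (initSeg n k) := by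
  ext j
  simp only [initSeg, Finset.mem_filter, Finset.mem_univ, true_and, Finset.mem_insert, Fin.ext_iff]
  omega

lemma initSeg_self : initSeg n n = Finset.univ := by
  ext j
  simp [initSeg]

lemma ddOp_lagrangeSum (F : Fin n → Kn n)
    (hF : ∀ (w : Equiv.Perm (Fin n)) j, permEquiv w (F j) = F (w j)) {k : ℕ} (hk : k + 1 < n) :
    ddOp n k (lagrangeSum xv F (initSeg n (k + 1)) * ∏ j ∈ (initSeg n (k + 1))ᶜ, xv j) =
      lagrangeSum xv F (initSeg n (k + 2)) * ∏ j ∈ (initSeg n (k + 2))ᶜ, xv j := by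
  set a : Fin n := ⟨k, Nat.lt_of_succ_lt hk⟩
  set b : Fin n := ⟨k + 1, hk⟩
  set T := initSeg n k
  set U := (initSeg n (k + 2))ᶜ
  set σ := Equiv.swap a b
  have hab : a ≠ b := by simp [a, b, Fin.ext_iff]
  have haT : a ∉ T := by simp [T, a, initSeg]
  have hbT : b ∉ T := by simp [T, b, initSeg]
  have hbU : b ∉ U := by simp [U, b, initSeg]
  have hSa : initSeg n (k + 1) = insert a T := initSeg_succ _
  have hSab : initSeg n (k + 2) = insert b (insert a T) := by rw [initSeg_succ hk, hSa]
  have hcompl : (initSeg n (k + 1))ᶜ = insert b U := by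
    simp only [U, hSab, ← hSa, Finset.compl_insert]
    exact (Finset.insert_erase (by simp [b, initSeg])).symm
  have hσU : ∀ j ∈ U, σ j = j := fun j hj => Equiv.swap_apply_of_ne_of_ne
    (by rintro rfl; simp [U, hSab] at hj) (by rintro rfl; exact hbU hj)
  have hσL : permEquiv σ (lagrangeSum xv F (insert a T)) = lagrangeSum xv F (insert b T) := by
    have hx : (permEquiv σ : Kn n →+* Kn n) ∘ xv = xv ∘ σ := funext (permEquiv_xv σ)
    have hF' : (permEquiv σ : Kn n →+* Kn n) ∘ F = F ∘ σ := funext (hF σ)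
    rw [← map_swap_insert haT hbT]
    exact (map_lagrangeSum (permEquiv σ : Kn n →+* Kn n) xv F _).trans
      (hx ▸ hF' ▸ lagrangeSum_comp_equiv σ xv F _)
  have hσP : permEquiv σ (∏ j ∈ U, xv j) = ∏ j ∈ U, xv j := by
    rw [map_prod]
    exact Finset.prod_congr rfl fun j hj => by rw [permEquiv_xv, hσU j hj]
  rw [ddOp_eq_permEquiv hk, hcompl, Finset.prod_insert hbU, hSab, hSa, map_mul, map_mul, hσL, hσP,
    permEquiv_xv, Equiv.swap_apply_right, ← lagrangeSum_insert_insert xv_injective F hab haT hbT]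
  ring

lemma ddChain_lagrangeSum (F : Fin n → Kn n)
    (hF : ∀ (w : Equiv.Perm (Fin n)) j, permEquiv w (F j) = F (w j)) (hn : 0 < n) {k : ℕ}
    (hk : k < n) :
    ddChain n (F ⟨0, hn⟩ * ∏ j ∈ Finset.univ.erase ⟨0, hn⟩, xv j) k =
      lagrangeSum xv F (initSeg n (k + 1)) * ∏ j ∈ (initSeg n (k + 1))ᶜ, xv j := by
  induction k with
  | zero =>
    simp [ddChain, initSeg_succ hn, initSeg_zero, lagrangeSum, lagrangeWeight,
      Finset.compl_singleton]
  | succ k ih => rw [ddChain, ih (by omega), ddOp_lagrangeSum F hF hk]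

end Chain

/-- for a rational function `f` of one variable (whose
coefficients do not involve the `x`-variables),
`f(x₁)·x₂⋯xₙ ∂₁∂₂⋯∂_{n-1} = Σ_i f(x_i) ∏_{j≠i} x_j / ∏_{j≠i}(x_i - x_j)`. -/
theorem divided_differences_lagrange (n : ℕ) (hn : 0 < n) (f : RatFunc (Kn n))
    (hnum : ∀ m : ℕ, f.num.coeff m ∈ Subfield.closure ({tv n} ∪ Set.range (yv (n := n))))
    (hden : ∀ m : ℕ, f.denom.coeff m ∈ Subfield.closure ({tv n} ∪ Set.range (yv (n := n)))) :
    ddChain n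
        (RatFunc.eval (RingHom.id (Kn n)) (xv ⟨0, hn⟩) f *
          ∏ i ∈ Finset.univ.erase (⟨0, hn⟩ : Fin n), xv i)
        (n - 1) =
      ∑ i : Fin n, RatFunc.eval (RingHom.id (Kn n)) (xv i) f *
          (∏ j ∈ Finset.univ.erase i, xv j) / ∏ j ∈ Finset.univ.erase i, (xv i - xv j) := by
  set F : Fin n → Kn n := fun i => RatFunc.eval (RingHom.id (Kn n)) (xv i) f
  have hF : ∀ (w : Equiv.Perm (Fin n)) j, permEquiv w (F j) = F (w j) := fun w j => by
    simp only [F, ← permEquiv_xv]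
    exact map_ratFuncEval_of_coeff_fixed (permEquiv w : Kn n →+* Kn n) f
      (fun m => permEquiv_eq_self_of_mem_closure w (hnum m))
      (fun m => permEquiv_eq_self_of_mem_closure w (hden m)) (xv j)
  rw [ddChain_lagrangeSum F hF hn (Nat.sub_lt hn one_pos), Nat.sub_one_add_one hn.ne', initSeg_self,
    Finset.compl_univ, Finset.prod_empty, mul_one, lagrangeSum]
  refine Finset.sum_congr rfl fun i _ => ?_
  rw [lagrangeWeight, Finset.prod_div_distrib, mul_div_assoc]

end Gaudin
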